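/- Let α > 1 be a real number and let d : ℝ³ × ℝ³ → [0,∞) be a quasi-distance on ℝ³ that is left-invariant for the Heisenberg group law, self-similar (there exists λ₀ ∈ (0,1) with d(δ_{λ₀}(p), δ_{λ₀}(q)) = λ₀·d(p,q) for all p, q, where δ_λ(x,y,z) := (λx, λ^α y, λ^{α+1} z)), continuous on ℝ³ × ℝ³ for the standard topology, and such that (ℝ³, d) satisfies the Weak Besicovitch Covering Property. Then for every p ∈ ℝ³ with d(0,p) ≤ 1 and every λ̄ > 0, there exists λ with 0 < λ < λ̄ such that d(0, p·δ_λ(p⁻¹)) ≤ 1. -/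

import Mathlib

/-- The first Heisenberg group law on `ℝ³`. -/
noncomputable def hmul (p q : ℝ × ℝ × ℝ) : ℝ × ℝ × ℝ :=
  (p.1 + q.1, p.2.1 + q.2.1, p.2.2 + q.2.2 + (p.1 * q.2.1 - p.2.1 * q.1) / 2)

/-- The group inverse for the Heisenberg group law. -/
noncomputable def hinv (p : ℝ × ℝ × ℝ) : ℝ × ℝ × ℝ := (-p.1, -p.2.1, -p.2.2)

/-- The dilations of the non-standard grading of exponent `α` on the first Heisenberg
group: `δ_l(x,y,z) = (l·x, l^α·y, l^(α+1)·z)`. -/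
noncomputable def hdil (α l : ℝ) (p : ℝ × ℝ × ℝ) : ℝ × ℝ × ℝ :=
  (l * p.1, l ^ α * p.2.1, l ^ (α + 1) * p.2.2)

/-- The closed ball of center `p` and radius `r` for a distance-like function `d`. -/
def QBall {X : Type*} (d : X → X → ℝ) (p : X) (r : ℝ) : Set X := {q | d q p ≤ r}

/-- A quasi-distance. -/
def IsQuasiDist {X : Type*} (d : X → X → ℝ) : Prop :=
  (∀ p q, 0 ≤ d p q) ∧ (∀ p q, d p q = d q p) ∧ (∀ p q, d p q = 0 ↔ p = q) ∧
    ∃ C : ℝ, 1 ≤ C ∧ ∀ p p' q, d p q ≤ C * (d p p' + d p' q)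

/-- A family of Besicovitch balls. -/
def IsBesicovitchFamily {X : Type*} (d : X → X → ℝ) (s : Finset X) (r : X → ℝ) : Prop :=
  (∀ x ∈ s, 0 < r x) ∧ (∀ x ∈ s, ∀ y ∈ s, x ≠ y → x ∉ QBall d y (r y)) ∧
    ∃ z, ∀ x ∈ s, z ∈ QBall d x (r x)

/-- The Weak Besicovitch Covering Property. -/
def HasWBCP {X : Type*} (d : X → X → ℝ) : Prop :=
  ∃ Q : ℕ, 1 ≤ Q ∧ ∀ (s : Finset X) (r : X → ℝ), IsBesicovitchFamily d s r → s.card ≤ Q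

/-!
Otherwise, by left invariance, `q = p⁻¹` satisfies `d(q, δ_l q) > 1` for all `0 < l < λ̄`.
Take a power `λ < min(1, λ̄)` of the self-similarity factor `λ₀` and the points
`f k = δ_{λ^k} q`. By self-similarity, for `m ≠ n`,
`d(f m, f n) = λ^min(m,n) · d(q, δ_{λ^|m-n|} q) > λ^min(m,n) ≥ λ^n · d(0, q) = d(0, f n)`,
so the balls `B(f k, d(0, f k))` all contain `0` and none contains another centre:
arbitrarily large Besicovitch families, against WBCP.
-/

theorem HasWBCP.false_of_separated {X : Type*} {d : X → X → ℝ} (h : HasWBCP d)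
    (hdd : ∀ x, d x x = 0) {f : ℕ → X} {z : X} (hpos : ∀ n, 0 < d z (f n))
    (hsep : ∀ m n, m ≠ n → d z (f n) < d (f m) (f n)) : False := by
  obtain ⟨Q, -, hQ⟩ := h
  have hinj : Function.Injective f := by
    intro m n hmn
    by_contra hne
    have := hsep m n hne
    rw [hmn, hdd] at this
    linarith [hpos n]
  have hfam : IsBesicovitchFamily d ((Finset.range (Q + 1)).map ⟨f, hinj⟩) (d z) := by
    refine ⟨?_, ?_, z, ?_⟩
    · simp only [Finset.mem_map, Function.Embedding.coeFn_mk]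
      rintro _ ⟨n, -, rfl⟩
      exact hpos n
    · simp only [Finset.mem_map, Function.Embedding.coeFn_mk]
      rintro _ ⟨m, -, rfl⟩ _ ⟨n, -, rfl⟩ hne hmem
      exact (hsep m n (fun h => hne (congrArg f h))).not_ge hmem
    · intro x _
      exact le_refl (d z x)
  have hcard := hQ _ _ hfam
  rw [Finset.card_map, Finset.card_range] at hcard
  omega

lemma hmul_zero (p : ℝ × ℝ × ℝ) : hmul p 0 = p := by
  simp [hmul]

lemma hmul_hinv_self (p : ℝ × ℝ × ℝ) : hmul p (hinv p) = 0 := by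
  simp only [hmul, hinv, Prod.mk_eq_zero]
  refine ⟨by ring, by ring, by ring⟩

lemma hdil_zero (α l : ℝ) : hdil α l 0 = 0 := by
  simp [hdil]

lemma hdil_one (α : ℝ) (p : ℝ × ℝ × ℝ) : hdil α 1 p = p := by
  simp [hdil]

lemma hdil_hdil (α : ℝ) {s t : ℝ} (hs : 0 ≤ s) (ht : 0 ≤ t) (p : ℝ × ℝ × ℝ) :
    hdil α s (hdil α t p) = hdil α (s * t) p := by
  simp only [hdil, Real.mul_rpow hs ht]
  exact Prod.ext (by ring) (Prod.ext (by ring) (by ring))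

section SelfSimilar

variable {α l : ℝ} {d : (ℝ × ℝ × ℝ) → (ℝ × ℝ × ℝ) → ℝ}

lemma dist_hdil_pow (hl : 0 ≤ l) (hss : ∀ p q, d (hdil α l p) (hdil α l q) = l * d p q)
    (n : ℕ) (p q : ℝ × ℝ × ℝ) :
    d (hdil α (l ^ n) p) (hdil α (l ^ n) q) = l ^ n * d p q := by
  induction n generalizing p q with
  | zero => simp [hdil_one]
  | succ n ih =>
    rw [pow_succ', ← hdil_hdil α hl (pow_nonneg hl n), ← hdil_hdil α hl (pow_nonneg hl n),
      hss, ih, mul_assoc]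

lemma dist_zero_lt_dist_hdil_pow (hsymm : ∀ p q, d p q = d q p) (hl0 : 0 < l) (hl1 : l < 1)
    (hss : ∀ p q, d (hdil α l p) (hdil α l q) = l * d p q)
    {q : ℝ × ℝ × ℝ} (hq : d 0 q ≤ 1)
    (hfar : ∀ k, 1 ≤ k → 1 < d q (hdil α (l ^ k) q))
    {m n : ℕ} (hmn : m ≠ n) :
    d 0 (hdil α (l ^ n) q) < d (hdil α (l ^ m) q) (hdil α (l ^ n) q) := by
  have hshift : ∀ j k : ℕ, d (hdil α (l ^ j) q) (hdil α (l ^ (j + k)) q) =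
      l ^ j * d q (hdil α (l ^ k) q) := fun j k => by
    rw [pow_add, ← hdil_hdil α (pow_nonneg hl0.le j) (pow_nonneg hl0.le k),
      dist_hdil_pow hl0.le hss]
  rw [← hdil_zero α (l ^ n), dist_hdil_pow hl0.le hss]
  have hradius : l ^ n * d 0 q ≤ l ^ n := mul_le_of_le_one_right (pow_nonneg hl0.le n) hq
  rcases Nat.lt_or_gt_of_ne hmn with h | h
  · obtain ⟨k, rfl⟩ := Nat.exists_eq_add_of_lt h
    have hpow : l ^ (m + (k + 1)) ≤ l ^ m := pow_le_pow_of_le_one hl0.le hl1.le (by omega)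
    rw [add_assoc] at hradius ⊢
    rw [hshift]
    nlinarith [mul_lt_mul_of_pos_left (hfar (k + 1) le_add_self) (pow_pos hl0 m)]
  · obtain ⟨k, rfl⟩ := Nat.exists_eq_add_of_lt h
    rw [add_assoc, hsymm (hdil α _ q), hshift]
    nlinarith [mul_lt_mul_of_pos_left (hfar (k + 1) le_add_self) (pow_pos hl0 n)]

end SelfSimilar

theorem statement18_general (α : ℝ)
    (d : (ℝ × ℝ × ℝ) → (ℝ × ℝ × ℝ) → ℝ)
    (hd : IsQuasiDist d)
    (hinvL : ∀ p q q', d (hmul p q) (hmul p q') = d q q')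
    (hss : ∃ l₀ : ℝ, 0 < l₀ ∧ l₀ < 1 ∧
      ∀ p q, d (hdil α l₀ p) (hdil α l₀ q) = l₀ * d p q)
    (hwbcp : HasWBCP d) :
    ∀ p : ℝ × ℝ × ℝ, d 0 p ≤ 1 → ∀ lb : ℝ, 0 < lb →
      ∃ l : ℝ, 0 < l ∧ l < lb ∧ d 0 (hmul p (hdil α l (hinv p))) ≤ 1 := by
  intro p hp lb hlb
  by_contra! hcon
  obtain ⟨hnn, hsymm, hzero, -⟩ := hd
  obtain ⟨l₀, hl₀0, hl₀1, hl₀⟩ := hss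
  have hdd : ∀ x, d x x = 0 := fun x => (hzero x x).mpr rfl
  have hq : d 0 (hinv p) ≤ 1 := by
    rwa [← hinvL p, hmul_zero, hmul_hinv_self, hsymm]
  have hfar : ∀ l, 0 < l → l < lb → 1 < d (hinv p) (hdil α l (hinv p)) := fun l hl0 hl => by
    rw [← hinvL p, hmul_hinv_self]
    exact hcon l hl0 hl
  have hq0 : 0 < d 0 (hinv p) := by
    refine (hnn _ _).lt_of_ne fun h => ?_
    have := hfar (lb / 2) (by positivity) (by linarith)
    rw [← (hzero _ _).mp h.symm, hdil_zero, hdd] at this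
    linarith
  obtain ⟨M, hM⟩ := exists_pow_lt_of_lt_one hlb hl₀1
  set l := l₀ ^ (M + 1)
  have hl0 : 0 < l := pow_pos hl₀0 _
  have hl1 : l < 1 := pow_lt_one₀ hl₀0.le hl₀1 M.succ_ne_zero
  have hl : l < lb := (pow_le_pow_of_le_one hl₀0.le hl₀1.le M.le_succ).trans_lt hM
  have hssl := dist_hdil_pow hl₀0.le hl₀ (M + 1)
  have hfar_pow : ∀ k, 1 ≤ k → 1 < d (hinv p) (hdil α (l ^ k) (hinv p)) := fun k hk =>
    hfar _ (pow_pos hl0 k) ((pow_le_of_le_one hl0.le hl1.le (by omega)).trans_lt hl)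
  refine hwbcp.false_of_separated hdd (f := fun k => hdil α (l ^ k) (hinv p)) (z := 0)
    (fun n => ?_) (fun m n hmn => dist_zero_lt_dist_hdil_pow hsymm hl0 hl1 hssl hq hfar_pow hmn)
  rw [← hdil_zero α (l ^ n), dist_hdil_pow hl0.le hssl]
  positivity

/-- Under the hypotheses of Theorem 6.7 (continuous self-similar quasi-distance on the
non-standard Heisenberg group of exponent `α > 1` satisfying WBCP), for every point `p`
of the unit ball and every `λ̄ > 0` there is `0 < λ < λ̄` with `p·δ_λ(p⁻¹)` in the unit
ball. -/
theorem statement18 (α : ℝ) (hα : 1 < α)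
    (d : (ℝ × ℝ × ℝ) → (ℝ × ℝ × ℝ) → ℝ)
    (hd : IsQuasiDist d)
    (hinvL : ∀ p q q', d (hmul p q) (hmul p q') = d q q')
    (hss : ∃ l₀ : ℝ, 0 < l₀ ∧ l₀ < 1 ∧
      ∀ p q, d (hdil α l₀ p) (hdil α l₀ q) = l₀ * d p q)
    (hcont : Continuous (fun pq : (ℝ × ℝ × ℝ) × (ℝ × ℝ × ℝ) => d pq.1 pq.2))
    (hwbcp : HasWBCP d) :
    ∀ p : ℝ × ℝ × ℝ, d 0 p ≤ 1 → ∀ lb : ℝ, 0 < lb →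
      ∃ l : ℝ, 0 < l ∧ l < lb ∧ d 0 (hmul p (hdil α l (hinv p))) ≤ 1 :=
  statement18_general α d hd hinvL hss hwbcp
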